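/- arXiv:1802.10327 — 4 statements merged into one kernel-verified Lean document; each statement's English description precedes it below -/
import Mathlib

section
/- There is an absolute constant C > 0 such that the following holds. Let k ≥ 2 be an integer, let 0 < λ ≤ 1, let x be sufficiently large in terms of k and λ, let g be a squarefree positive integer with log x ≤ g ≤ 2 log x, and let h₁ < ... < h_k be integers with 0 < h₁ and h_k < λ log x. Let d be a positive integer with d ≤ √(λ log x) and gcd(d, g) = 1. Then for every residue class c modulo d, the number of positive integers h ≤ 5λ log x with h ∉ {h₁, ..., h_k}, gcd(h, g) = 1 and h ≡ c (mod d) is at most C · (φ(g)/g) · (λ log x)/d. -/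
/-!
Let `a` be the product of the primes `p ≤ T` dividing `g`. For `h ≡ c (mod d)` with
`(d, a) = 1`, the condition `(h, a) = 1` is periodic modulo `a d` with `φ(a)` admissible classes
per period, so the number of such `h ≤ H` is at most `(H / (a d) + 1) φ(a) ≤ (φ(a)/a) (H/d) + a`.
Since `g² < (T + 1)^(T + 1)`, fewer than `T / 2` prime factors of `g` exceed `T`, hence
`φ(g)/g ≥ φ(a)/(2a) ≥ 1/(2a)`. With `T ≍ log log x` both this and
`2a² ≤ 2 · 16^T ≤ √(λ log x) ≤ λ log x / d` hold, so the main term is at most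
`10 (φ(g)/g) λ log x / d` and the error `a` at most `(φ(g)/g) λ log x / d`.
-/

open Finset

lemma one_sub_sum_le_prod_one_sub {ι R : Type*} [CommRing R] [LinearOrder R]
    [IsStrictOrderedRing R] {s : Finset ι} {f : ι → R} (h0 : ∀ i ∈ s, 0 ≤ f i)
    (h1 : ∀ i ∈ s, f i ≤ 1) : 1 - ∑ i ∈ s, f i ≤ ∏ i ∈ s, (1 - f i) := by
  induction s using Finset.cons_induction with
  | empty => simp
  | cons i s hi ih =>
    rw [prod_cons, sum_cons]
    have hfi0 := h0 i (mem_cons_self i s)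
    have hfi1 := h1 i (mem_cons_self i s)
    have ih' := ih (fun j hj => h0 j (mem_cons_of_mem hj)) (fun j hj => h1 j (mem_cons_of_mem hj))
    have hsum : 0 ≤ ∑ j ∈ s, f j := sum_nonneg fun j hj => h0 j (mem_cons_of_mem hj)
    nlinarith [mul_le_mul_of_nonneg_left ih' (sub_nonneg.mpr hfi1)]

namespace Nat

lemma totient_div_self_eq_prod {n : ℕ} (hn : n ≠ 0) :
    (φ n : ℝ) / n = ∏ p ∈ n.primeFactors, (1 - (p : ℝ)⁻¹) := by
  rw [div_eq_iff (by exact_mod_cast hn), mul_comm]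
  have h := congrArg ((↑) : ℚ → ℝ) (totient_eq_mul_prod_factors n)
  push_cast at h
  exact h

def smoothRadical (n T : ℕ) : ℕ := ∏ p ∈ n.primeFactors with p ≤ T, p

variable (n T : ℕ)

lemma primeFactors_smoothRadical :
    (smoothRadical n T).primeFactors = {p ∈ n.primeFactors | p ≤ T} :=
  primeFactors_prod fun _ hp => prime_of_mem_primeFactors (mem_filter.mp hp).1

lemma smoothRadical_pos : 0 < smoothRadical n T :=
  prod_pos fun _ hp => pos_of_mem_primeFactors (mem_filter.mp hp).1

lemma smoothRadical_dvd : smoothRadical n T ∣ n :=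
  (prod_dvd_prod_of_subset _ _ _ (filter_subset _ _)).trans (prod_primeFactors_dvd n)

lemma smoothRadical_le_four_pow : smoothRadical n T ≤ 4 ^ T := by
  refine (le_of_dvd (primorial_pos T) (prod_dvd_prod_of_subset _ _ _ ?_)).trans
    (primorial_le_four_pow T)
  intro p hp
  obtain ⟨hpn, hpT⟩ := mem_filter.mp hp
  exact mem_filter.mpr ⟨mem_range.mpr (lt_succ_of_le hpT), prime_of_mem_primeFactors hpn⟩

lemma inv_le_one_of_mem_primeFactors {p : ℕ} (hp : p ∈ n.primeFactors) : (p : ℝ)⁻¹ ≤ 1 :=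
  inv_le_one_of_one_le₀ (by exact_mod_cast pos_of_mem_primeFactors hp)

variable {n T}

lemma two_mul_card_primeFactors_gt_le (hn : n ≠ 0) (hnT : n ^ 2 < (T + 1) ^ (T + 1)) :
    2 * #{p ∈ n.primeFactors | ¬p ≤ T} ≤ T := by
  set S := {p ∈ n.primeFactors | ¬p ≤ T}
  have hpow : (T + 1) ^ #S ≤ n :=
    (pow_card_le_prod S (fun p => p) (T + 1) fun p hp => not_le.mp (mem_filter.mp hp).2).trans
      (le_of_dvd (pos_of_ne_zero hn)
        ((prod_dvd_prod_of_subset _ _ _ (filter_subset _ _)).trans (prod_primeFactors_dvd n)))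
  have hlt : (T + 1) ^ (2 * #S) < (T + 1) ^ (T + 1) := by
    rw [pow_mul']
    exact (Nat.pow_le_pow_left hpow 2).trans_lt hnT
  by_contra! h
  exact (Nat.pow_le_pow_right T.succ_pos h).not_gt hlt

lemma half_le_prod_primeFactors_gt (hn : n ≠ 0) (hnT : n ^ 2 < (T + 1) ^ (T + 1)) :
    (1 / 2 : ℝ) ≤ ∏ p ∈ n.primeFactors with ¬p ≤ T, (1 - (p : ℝ)⁻¹) := by
  set S := {p ∈ n.primeFactors | ¬p ≤ T}
  have hsum : ∑ p ∈ S, (p : ℝ)⁻¹ ≤ #S / ((T : ℝ) + 1) := by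
    rw [div_eq_mul_inv, ← nsmul_eq_mul]
    refine sum_le_card_nsmul S _ _ fun p hp => inv_anti₀ (by positivity) ?_
    exact_mod_cast not_le.mp (mem_filter.mp hp).2
  have hcard : 2 * (#S : ℝ) ≤ T := by exact_mod_cast two_mul_card_primeFactors_gt_le hn hnT
  calc (1 / 2 : ℝ) ≤ 1 - #S / ((T : ℝ) + 1) := by
        rw [le_sub_comm, div_le_iff₀ (by positivity)]; linarith
    _ ≤ 1 - ∑ p ∈ S, (p : ℝ)⁻¹ := by linarith
    _ ≤ ∏ p ∈ S, (1 - (p : ℝ)⁻¹) :=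
        one_sub_sum_le_prod_one_sub (fun _ _ => by positivity) fun p hp => inv_le_one_of_mem_primeFactors n (mem_filter.mp hp).1

lemma totient_div_smoothRadical_le (hn : n ≠ 0) (hnT : n ^ 2 < (T + 1) ^ (T + 1)) :
    (φ (smoothRadical n T) : ℝ) / smoothRadical n T ≤ 2 * (φ n / n) := by
  rw [totient_div_self_eq_prod hn, totient_div_self_eq_prod (smoothRadical_pos n T).ne',
    primeFactors_smoothRadical, ← prod_filter_mul_prod_filter_not n.primeFactors (· ≤ T)]
  have hsmooth : 0 ≤ ∏ p ∈ n.primeFactors with p ≤ T, (1 - (p : ℝ)⁻¹) :=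
    prod_nonneg fun p hp => sub_nonneg.mpr (inv_le_one_of_mem_primeFactors n (mem_filter.mp hp).1)
  nlinarith [half_le_prod_primeFactors_gt hn hnT]

/-- By the Chinese remainder theorem, `h` with `h % d` fixed is determined by `h / (a * d)` and
`h % a`, and the latter is coprime to `a`. -/
lemma card_filter_coprime_mod_eq_le {a d : ℕ} (ha : 0 < a) (had : a.Coprime d) (H c : ℕ) :
    #{h ∈ Icc 1 H | h.Coprime a ∧ h % d = c % d} ≤ (H / (a * d) + 1) * φ a := by
  rw [totient_eq_card_coprime, ← card_range (H / (a * d) + 1), ← card_product]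
  refine card_le_card_of_injOn (fun h => (h / (a * d), h % a)) (fun h hh => ?_)
    (fun h hh h' hh' heq => ?_)
  · simp only [coe_filter, mem_Icc, Set.mem_ofPred_eq, coe_product, Set.mem_prod, mem_coe,
      mem_range] at hh ⊢
    obtain ⟨⟨-, hH⟩, hcop, -⟩ := hh
    exact ⟨lt_succ_of_le (Nat.div_le_div_right hH), mod_lt _ ha,
      ((ZMod.coprime_mod_iff_coprime h a).mpr hcop).symm⟩
  · simp only [coe_filter, mem_Icc, Set.mem_ofPred_eq, Prod.mk.injEq] at hh hh' heq
    have hmod : h ≡ h' [MOD a * d] :=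
      (modEq_and_modEq_iff_modEq_mul had).mp ⟨heq.2, hh.2.2.trans hh'.2.2.symm⟩
    rw [← div_add_mod h (a * d), ← div_add_mod h' (a * d), heq.1, hmod]

theorem card_filter_coprime_mod_eq_le_of_sq_lt {g d T : ℕ} (hg : g ≠ 0)
    (hgT : g ^ 2 < (T + 1) ^ (T + 1)) (hdg : d.Coprime g) (H c : ℕ) :
    (#{h ∈ Icc 1 H | h.Coprime g ∧ h % d = c % d} : ℝ) ≤
      2 * (φ g / g) * (H / d) + smoothRadical g T := by
  set a := smoothRadical g T
  have hsub : {h ∈ Icc 1 H | h.Coprime g ∧ h % d = c % d} ⊆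
      {h ∈ Icc 1 H | h.Coprime a ∧ h % d = c % d} :=
    monotone_filter_right _ fun _ _ hh => ⟨hh.1.coprime_dvd_right (smoothRadical_dvd g T), hh.2⟩
  have hcount := (card_le_card hsub).trans <| card_filter_coprime_mod_eq_le
    (smoothRadical_pos g T) (hdg.coprime_dvd_right (smoothRadical_dvd g T)).symm H c
  calc (#{h ∈ Icc 1 H | h.Coprime g ∧ h % d = c % d} : ℝ)
      ≤ ((H / (a * d) : ℕ) + 1) * φ a := by exact_mod_cast hcount
    _ ≤ (H / (a * d) + 1) * φ a := by
      gcongr; exact Nat.cast_div_le.trans_eq (by rw [Nat.cast_mul])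
    _ = φ a / a * (H / d) + φ a := by ring
    _ ≤ 2 * (φ g / g) * (H / d) + a := by
      gcongr ?_ * _ + ?_
      · exact totient_div_smoothRadical_le hg hgT
      · exact_mod_cast totient_le a

lemma smoothRadical_le_totient_div_mul {g T : ℕ} (hg : g ≠ 0) (hgT : g ^ 2 < (T + 1) ^ (T + 1))
    {Y : ℝ} (hY : 2 * 16 ^ T ≤ Y) : (smoothRadical g T : ℝ) ≤ φ g / g * Y := by
  set a := smoothRadical g T
  have ha : (1 : ℝ) ≤ a := by exact_mod_cast smoothRadical_pos g T
  have hφa : (1 : ℝ) ≤ φ a := by exact_mod_cast totient_pos.mpr (smoothRadical_pos g T)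
  have hinv : 1 / (2 * a) ≤ (φ g / g : ℝ) := by
    calc 1 / (2 * a) ≤ (φ a / a : ℝ) / 2 := by rw [div_div, mul_comm]; gcongr
      _ ≤ φ g / g := by linarith [totient_div_smoothRadical_le hg hgT]
  have hsq : 2 * (a : ℝ) ^ 2 ≤ Y := by
    have ha4 : (a : ℝ) ≤ 4 ^ T := by exact_mod_cast smoothRadical_le_four_pow g T
    calc 2 * (a : ℝ) ^ 2 ≤ 2 * ((4 : ℝ) ^ T) ^ 2 := by gcongr
      _ = 2 * 16 ^ T := by rw [← pow_mul, mul_comm T 2, pow_mul]; norm_num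
      _ ≤ Y := hY
  calc (a : ℝ) = 1 / (2 * a) * (2 * a ^ 2) := by field_simp
    _ ≤ φ g / g * Y := mul_le_mul hinv hsq (by positivity) (by positivity)

end Nat

lemma eventually_exists_sq_lt_pow_self_and_le_sqrt {lam : ℝ} (hlam : 0 < lam) :
    ∀ᶠ X : ℝ in Filter.atTop,
      ∃ T : ℕ, (2 * X) ^ 2 < (T + 1) ^ (T + 1) ∧ 2 * 16 ^ T ≤ Real.sqrt (lam * X) := by
  refine Filter.eventually_atTop.mpr
    ⟨max (4 * 256 ^ 256 ^ 3 / lam) (256 / lam ^ 3), fun X hX => ?_⟩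
  have hX₁ : 4 * 256 ^ 256 ^ 3 / lam ≤ X := (le_max_left _ _).trans hX
  have hX₂ : 256 / lam ^ 3 ≤ X := (le_max_right _ _).trans hX
  have hX_nonneg : 0 ≤ X := (by positivity : (0 : ℝ) ≤ 256 / lam ^ 3).trans hX₂
  have hlamX : 0 ≤ lam * X / 4 := by positivity
  set N := ⌊lam * X / 4⌋₊
  have hN : 256 ^ 256 ^ 3 ≤ N := by
    refine Nat.le_floor ?_
    have := (div_le_iff₀ hlam).mp hX₁
    rw [Nat.cast_pow, Nat.cast_ofNat, le_div_iff₀ four_pos]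
    generalize (256 : ℝ) ^ 256 ^ 3 = K at this ⊢
    linarith
  -- the largest `T` with `4 * 256 ^ T ≤ lam * X`
  set T := Nat.log 256 N
  refine ⟨T, ?_, ?_⟩
  · have hT : 256 ^ 3 ≤ T + 1 := by
      have := (Nat.le_log_iff_pow_le (by norm_num) (lt_of_lt_of_le (by positivity) hN).ne').mpr hN
      exact Nat.le_succ_of_le this
    set Z : ℝ := 256 ^ (T + 1)
    have hXZ : lam * X / 4 < Z := (Nat.lt_floor_add_one _).trans_le <| by
      have hNZ : N + 1 ≤ 256 ^ (T + 1) := Nat.lt_pow_succ_log_self (by norm_num) N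
      show (N : ℝ) + 1 ≤ (256 : ℝ) ^ (T + 1)
      exact_mod_cast hNZ
    have hZ : 64 / lam ^ 2 < Z := by
      calc 64 / lam ^ 2 = lam * (256 / lam ^ 3) / 4 := by field_simp; norm_num
        _ ≤ lam * X / 4 := by gcongr
        _ < Z := hXZ
    calc (2 * X) ^ 2 < (8 * Z / lam) ^ 2 := by
          gcongr
          rw [lt_div_iff₀ hlam]; linarith
      _ = 64 / lam ^ 2 * Z * Z := by ring
      _ ≤ Z * Z * Z := by gcongr
      _ = Z ^ 3 := by ring
      _ = ((256 : ℝ) ^ 3) ^ (T + 1) := by rw [← pow_mul, mul_comm, pow_mul]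
      _ ≤ (T + 1) ^ (T + 1) := by gcongr; exact_mod_cast hT
  · refine Real.le_sqrt_of_sq_le ?_
    have h256 : (256 : ℝ) ^ T ≤ N := by
      exact_mod_cast Nat.pow_log_le_self 256 (lt_of_lt_of_le (by positivity) hN).ne'
    calc (2 * 16 ^ T : ℝ) ^ 2 = 4 * 256 ^ T := by
          rw [mul_pow, ← pow_mul, mul_comm T 2, pow_mul]; norm_num
      _ ≤ 4 * N := by gcongr
      _ ≤ lam * X := by linarith [Nat.floor_le hlamX]

/-- Lemma 4.1: the number of positive `h ≤ 5λ log x` avoiding the `h_i`, coprime to `g`, and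
lying in a fixed residue class `c (mod d)` is at most `C · (φ(g)/g) · (λ log x)/d`. -/
theorem stmt4 :
    ∃ C : ℝ, 0 < C ∧
    ∀ k : ℕ, 2 ≤ k →
    ∀ lam : ℝ, 0 < lam → lam ≤ 1 → ∃ x₀ : ℝ,
    ∀ x : ℝ, x₀ ≤ x →
    ∀ g : ℕ, 0 < g → Squarefree g → Real.log x ≤ (g : ℝ) → (g : ℝ) ≤ 2 * Real.log x →
    ∀ hs : Fin k → ℤ, StrictMono hs → (∀ i, 0 < hs i) →
      (∀ i, (hs i : ℝ) < lam * Real.log x) →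
    ∀ d : ℕ, 0 < d → (d : ℝ) ≤ Real.sqrt (lam * Real.log x) → Nat.Coprime d g →
    ∀ c : ℕ,
      (((Finset.Icc 1 ⌊5 * lam * Real.log x⌋₊).filter
          (fun h : ℕ => (∀ i, (h : ℤ) ≠ hs i) ∧ Nat.Coprime h g ∧ h % d = c % d)).card : ℝ)
        ≤ C * ((Nat.totient g : ℝ) / g) * (lam * Real.log x) / d := by
  refine ⟨11, by norm_num, fun k _ lam hlam _ => ?_⟩
  obtain ⟨X₀, hX₀⟩ :=
    Filter.eventually_atTop.mp (eventually_exists_sq_lt_pow_self_and_le_sqrt hlam)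
  refine ⟨Real.exp X₀, fun x hx g hg _ _ hgX hs _ _ _ d hd hdY hdg c => ?_⟩
  obtain ⟨T, hgT, hTY⟩ :=
    hX₀ _ ((Real.le_log_iff_exp_le ((Real.exp_pos X₀).trans_le hx)).mpr hx)
  set Y := lam * Real.log x
  have hlogx : 0 ≤ Real.log x := by
    have : (1 : ℝ) ≤ g := by exact_mod_cast hg
    linarith
  have hgT' : g ^ 2 < (T + 1) ^ (T + 1) := by
    exact_mod_cast (pow_le_pow_left₀ (Nat.cast_nonneg g) hgX 2).trans_lt hgT
  have hYd : 2 * 16 ^ T ≤ Y / d := hTY.trans <| by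
    rw [← Real.div_sqrt]
    gcongr
  set H := ⌊5 * lam * Real.log x⌋₊
  have hsub : (Icc 1 H).filter
        (fun h : ℕ => (∀ i, (h : ℤ) ≠ hs i) ∧ h.Coprime g ∧ h % d = c % d) ⊆
      {h ∈ Icc 1 H | h.Coprime g ∧ h % d = c % d} :=
    monotone_filter_right _ fun _ _ hh => hh.2
  calc _ ≤ (#{h ∈ Icc 1 H | h.Coprime g ∧ h % d = c % d} : ℝ) := by
        exact_mod_cast card_le_card hsub
    _ ≤ 2 * (Nat.totient g / g) * (H / d) + Nat.smoothRadical g T :=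
        Nat.card_filter_coprime_mod_eq_le_of_sq_lt hg.ne' hgT' hdg H c
    _ ≤ 2 * (Nat.totient g / g) * (5 * Y / d) + Nat.totient g / g * (Y / d) := by
        gcongr
        · exact (Nat.floor_le (mul_nonneg (by positivity) hlogx)).trans_eq (by ring)
        · exact Nat.smoothRadical_le_totient_div_mul hg.ne' hgT' hYd
    _ = 11 * (Nat.totient g / g) * Y / d := by ring
end

section
/- There exist absolute constants c₀ > 0 and C₄ > 0 such that the following holds. For every sufficiently large integer k, setting λ = c₀ · k^{-4} (log k)^{-2}, if x is sufficiently large in terms of k, then the number of admissible sets {h₁, ..., h_k} of k integers with 0 < h₁ < h₂ < ... < h_k < λ log x is at least exp(−C₄ k²) · (log x)^k. -/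
/-!
Every `k`-subset of the multiples of the primorial `k#` is admissible: each prime `p ≤ k`
divides all of its elements, and a prime `p > k` has more residue classes than the set has
elements. Below `y` there are `y / k#` such multiples, hence at least `(y / (k · k#))^k`
admissible `k`-sets, and `k#` is small enough (`k# ≤ 4^k`) to be absorbed in `exp(-C k²)`.
-/

/-- A finite set of integers is admissible if for every prime `p` its elements do not cover
all residue classes modulo `p`. -/
def AdmissibleFinset (H : Finset ℕ) : Prop :=
  ∀ p : ℕ, p.Prime → ∃ r : ZMod p, ∀ h ∈ H, (h : ZMod p) ≠ r

theorem admissibleFinset_of_primorial_dvd {n : ℕ} {H : Finset ℕ} (hcard : H.card ≤ n)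
    (hdvd : ∀ h ∈ H, primorial n ∣ h) : AdmissibleFinset H := by
  intro p hp
  by_cases hpn : p ≤ n
  · refine ⟨1, fun h hh => ?_⟩
    have : ((h : ℕ) : ZMod p) = 0 := by
      rw [ZMod.natCast_eq_zero_iff]
      exact (hp.dvd_primorial_iff.mpr hpn).trans (hdvd h hh)
    rw [this]
    have : Fact p.Prime := ⟨hp⟩
    exact zero_ne_one
  · have : NeZero p := ⟨hp.ne_zero⟩
    have hlt : (H.image (Nat.cast : ℕ → ZMod p)).card < (Finset.univ : Finset (ZMod p)).card := by
      rw [Finset.card_univ, ZMod.card]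
      exact Finset.card_image_le.trans_lt (by omega)
    obtain ⟨r, -, hr⟩ := Finset.exists_mem_notMem_of_card_lt_card hlt
    exact ⟨r, fun h hh hhr => hr (Finset.mem_image.mpr ⟨h, hh, hhr⟩)⟩

def admissibleSetsBelow (k : ℕ) (y : ℝ) : Set (Finset ℕ) :=
  {H | H.card = k ∧ (∀ h ∈ H, 0 < h ∧ (h : ℝ) < y) ∧ AdmissibleFinset H}

theorem admissibleSetsBelow_finite (k : ℕ) (y : ℝ) : (admissibleSetsBelow k y).Finite := by
  refine (Finset.range ⌈y⌉₊).powerset.finite_toSet.subset fun H hH => ?_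
  simp only [Finset.coe_powerset, Set.mem_preimage, Set.mem_powerset_iff, Finset.coe_subset]
  intro h hh
  exact Finset.mem_range.mpr (Nat.lt_ceil.mpr (hH.2.1 h hh).2)

theorem choose_le_ncard_admissibleSetsBelow {k m : ℕ} {y : ℝ}
    (hy : (m * primorial k : ℝ) < y) : m.choose k ≤ (admissibleSetsBelow k y).ncard := by
  let multiples : Finset ℕ :=
    (Finset.Icc 1 m).map ⟨(· * primorial k), mul_left_injective₀ (primorial_ne_zero k)⟩
  have hsub : (multiples.powersetCard k : Set (Finset ℕ)) ⊆ admissibleSetsBelow k y := by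
    intro H hH
    obtain ⟨hHsub, hHcard⟩ := Finset.mem_powersetCard.mp hH
    have hmem : ∀ h ∈ H, ∃ i, (1 ≤ i ∧ i ≤ m) ∧ i * primorial k = h := by
      intro h hh
      simpa [multiples] using hHsub hh
    refine ⟨hHcard, fun h hh => ?_, admissibleFinset_of_primorial_dvd hHcard.le fun h hh => ?_⟩
    · obtain ⟨i, ⟨hi1, him⟩, rfl⟩ := hmem h hh
      refine ⟨Nat.mul_pos hi1 (primorial_pos k), lt_of_le_of_lt ?_ hy⟩
      push_cast
      gcongr
    · obtain ⟨i, -, rfl⟩ := hmem h hh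
      exact dvd_mul_left _ _
  calc m.choose k = (multiples.powersetCard k).card := by simp [multiples]
    _ = (multiples.powersetCard k : Set (Finset ℕ)).ncard := (Set.ncard_coe_finset _).symm
    _ ≤ (admissibleSetsBelow k y).ncard := Set.ncard_le_ncard hsub (admissibleSetsBelow_finite k y)

theorem pow_le_ncard_admissibleSetsBelow {k : ℕ} {A y : ℝ} (hk : 0 < k) (hA : 0 ≤ A)
    (hy : (k * A + k + 1) * primorial k < y) : A ^ k ≤ (admissibleSetsBelow k y).ncard := by
  set c := ⌈k * A⌉₊
  have hkR : (0 : ℝ) < k := by exact_mod_cast hk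
  have hc : (c : ℝ) < k * A + 1 := Nat.ceil_lt_add_one (by positivity)
  have hA_le : A ≤ (c + 1 : ℝ) / k := by
    rw [le_div_iff₀ hkR]
    linarith [Nat.le_ceil (k * A)]
  have hchoose := Nat.pow_le_choose (α := ℝ) k (c + k)
  rw [show c + k + 1 - k = c + 1 by omega] at hchoose
  calc A ^ k ≤ ((c + 1 : ℝ) / k) ^ k := by gcongr
    _ = (c + 1 : ℝ) ^ k / (k : ℝ) ^ k := div_pow _ _ _
    _ ≤ (((c + 1 : ℕ) ^ k : ℕ) : ℝ) / (k.factorial : ℝ) := by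
      push_cast
      gcongr
      exact_mod_cast k.factorial_le_pow
    _ ≤ (c + k).choose k := by exact_mod_cast hchoose
    _ ≤ (admissibleSetsBelow k y).ncard := by
      have hm : ((c + k : ℕ) * primorial k : ℝ) < y := by
        refine lt_of_le_of_lt ?_ hy
        push_cast
        exact mul_le_mul_of_nonneg_right (by linarith) (primorial k).cast_nonneg
      exact_mod_cast choose_le_ncard_admissibleSetsBelow hm

theorem four_mul_primorial_mul_pow_mul_log_sq_le_exp {k : ℕ} (hk : 2 ≤ k) :
    4 * (primorial k : ℝ) * (k : ℝ) ^ 5 * Real.log k ^ 2 ≤ Real.exp (10 * k) := by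
  have hk0 : (0 : ℝ) ≤ k := k.cast_nonneg
  have hlog : Real.log k ^ 2 ≤ (k : ℝ) ^ 2 :=
    pow_le_pow_left₀ (Real.log_nonneg (by exact_mod_cast (by omega : 1 ≤ k)))
      (Real.log_le_self hk0) 2
  have hprim : (primorial k : ℝ) ≤ 2 ^ (2 * k) := by
    rw [pow_mul]
    exact_mod_cast primorial_le_four_pow k
  have hpow : (k : ℝ) ^ 7 ≤ 2 ^ (7 * k) := by
    rw [mul_comm, pow_mul]
    exact pow_le_pow_left₀ hk0 (by exact_mod_cast k.lt_two_pow_self.le) 7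
  have htwo : (2 : ℝ) ≤ Real.exp 1 := by linarith [Real.add_one_le_exp (1 : ℝ)]
  calc 4 * (primorial k : ℝ) * (k : ℝ) ^ 5 * Real.log k ^ 2
      ≤ 4 * 2 ^ (2 * k) * (k : ℝ) ^ 5 * (k : ℝ) ^ 2 := by gcongr
    _ = 2 ^ 2 * 2 ^ (2 * k) * (k : ℝ) ^ 7 := by ring
    _ ≤ 2 ^ 2 * 2 ^ (2 * k) * 2 ^ (7 * k) := by gcongr
    _ = 2 ^ (9 * k + 2) := by rw [← pow_add, ← pow_add]; ring_nf
    _ ≤ Real.exp 1 ^ (9 * k + 2) := by gcongr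
    _ ≤ Real.exp (10 * k) := by
        rw [← Real.exp_nat_mul, Real.exp_le_exp]
        push_cast
        have : (2 : ℝ) ≤ k := by exact_mod_cast hk
        linarith

/-- There are absolute constants `c₀, C₄ > 0` such that for all sufficiently large `k`, with
`λ = c₀ k⁻⁴ (log k)⁻²`, for `x` sufficiently large in terms of `k` the number of admissible
sets `{h₁ < ⋯ < h_k}` with `0 < h₁` and `h_k < λ log x` is at least `exp(-C₄ k²)(log x)^k`. -/
theorem stmt6 :
    ∃ c₀ C₄ : ℝ, 0 < c₀ ∧ 0 < C₄ ∧ ∃ k₀ : ℕ, ∀ k : ℕ, k₀ ≤ k →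
    ∃ x₀ : ℝ, ∀ x : ℝ, x₀ ≤ x →
      ({H : Finset ℕ | H.card = k ∧
          (∀ h ∈ H, 0 < h ∧
            (h : ℝ) < (c₀ * ((k : ℝ) ^ 4)⁻¹ * ((Real.log k) ^ 2)⁻¹) * Real.log x) ∧
          AdmissibleFinset H}.ncard : ℝ)
        ≥ Real.exp (-C₄ * (k : ℝ) ^ 2) * (Real.log x) ^ k := by
  refine ⟨1, 10, one_pos, by norm_num, 2, fun k hk => ?_⟩
  set lam : ℝ := 1 * ((k : ℝ) ^ 4)⁻¹ * (Real.log k ^ 2)⁻¹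
  have hkR : (2 : ℝ) ≤ k := by exact_mod_cast hk
  have hlam : 0 < lam := by have := Real.log_pos (by linarith : (1 : ℝ) < k); positivity
  have hW : (0 : ℝ) < primorial k := by exact_mod_cast primorial_pos k
  have hsmall : k * Real.exp (-(10 * k)) * primorial k ≤ lam / 4 := by
    have hexp := four_mul_primorial_mul_pow_mul_log_sq_le_exp hk
    have := Real.log_pos (by linarith : (1 : ℝ) < k)
    simp only [lam]
    rw [Real.exp_neg]
    field_simp
    ring_nf at hexp ⊢
    linarith
  refine ⟨Real.exp (4 * (k + 1) * primorial k / lam), fun x hx => ?_⟩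
  have hlogx : 4 * (k + 1) * primorial k / lam ≤ Real.log x :=
    (Real.le_log_iff_exp_le (lt_of_lt_of_le (Real.exp_pos _) hx)).mpr hx
  have hlogx0 : 0 < Real.log x := lt_of_lt_of_le (by positivity) hlogx
  rw [div_le_iff₀ hlam] at hlogx
  have hpow : Real.exp (-10 * (k : ℝ) ^ 2) * Real.log x ^ k
      = (Real.exp (-(10 * k)) * Real.log x) ^ k := by
    rw [mul_pow, ← Real.exp_nat_mul]; ring_nf
  rw [ge_iff_le, hpow]
  refine pow_le_ncard_admissibleSetsBelow (by omega) (by positivity) ?_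
  calc (k * (Real.exp (-(10 * k)) * Real.log x) + k + 1) * primorial k
      = k * Real.exp (-(10 * k)) * primorial k * Real.log x + (k + 1) * primorial k := by ring
    _ ≤ lam / 4 * Real.log x + Real.log x * lam / 4 := by gcongr; linarith
    _ < lam * Real.log x := by linarith [mul_pos hlam hlogx0]
end

section
/- Let m ≥ 0 be an integer and let λ be a real number with 0 < λ < 1/5. Let x be sufficiently large in terms of m and λ, let n be an integer with x < n ≤ 2x, and let g be an integer with log x < g ≤ 2 log x. Set N₀ = g·n. Suppose that the interval [N₀, N₀ + 5λ log x] contains at least m primes, and that every prime in [N₀, N₀ + 5λ log x] lies in the open interval (N₀, N₀ + λ log x). Then there exists an integer j with 0 ≤ j ≤ ⌊λ log N₀⌋ such that the interval [N₀ + j, N₀ + j + λ log(N₀ + j)] contains exactly m primes. -/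
/-- The number of primes `p` (as natural numbers) with `a ≤ p ≤ b`. -/
noncomputable def primesIn (a b : ℝ) : ℕ :=
  {p : ℕ | p.Prime ∧ a ≤ (p : ℝ) ∧ (p : ℝ) ≤ b}.ncard

lemma primesSet_finite (a b : ℝ) :
    {p : ℕ | p.Prime ∧ a ≤ (p : ℝ) ∧ (p : ℝ) ≤ b}.Finite := by
  apply Set.Finite.subset (Set.finite_Iic ⌈b⌉₊)
  intro p hp
  simp only [Set.mem_Iic]
  exact_mod_cast hp.2.2.trans (Nat.le_ceil b)

/-- Discrete intermediate value: a sequence starting at `≥ m`, ending at `0`,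
that drops by at most `1` at each step, hits `m`. -/
lemma slide_lemma (c : ℕ → ℕ) (J m : ℕ) (h0 : m ≤ c 0) (hJ : c J = 0)
    (hstep : ∀ j, j < J → c j ≤ c (j + 1) + 1) : ∃ j, j ≤ J ∧ c j = m := by
  rcases Nat.eq_zero_or_pos m with hm | hm
  · exact ⟨J, le_rfl, by omega⟩
  · set S := Finset.filter (fun j => m ≤ c j) (Finset.range (J + 1)) with hS
    have hne : S.Nonempty := ⟨0, by simp [hS, h0]⟩
    set j₀ := S.max' hne with hj₀def
    have hj₀ : j₀ ∈ S := S.max'_mem hne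
    rw [hS, Finset.mem_filter, Finset.mem_range] at hj₀
    have hj₀J : j₀ ≤ J := by omega
    have hj₀ne : j₀ ≠ J := by
      intro h
      rw [h, hJ] at hj₀
      omega
    have hlt : j₀ < J := lt_of_le_of_ne hj₀J hj₀ne
    have hnot : ¬ m ≤ c (j₀ + 1) := by
      intro h
      have hmem : j₀ + 1 ∈ S := by
        rw [hS, Finset.mem_filter, Finset.mem_range]
        exact ⟨by omega, h⟩
      have := S.le_max' _ hmem
      omega
    have := hstep j₀ hlt
    exact ⟨j₀, hj₀J, by omega⟩

set_option maxHeartbeats 1000000 in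
/-- The sliding argument: if `[N₀, N₀ + 5λ log x]` contains at least `m` primes, all of which
lie in `(N₀, N₀ + λ log x)`, then some shifted interval `[N₀+j, N₀+j+λ log(N₀+j)]` with
`0 ≤ j ≤ ⌊λ log N₀⌋` contains exactly `m` primes. -/
theorem stmt8 (m : ℕ) (lam : ℝ) (hlam₀ : 0 < lam) (hlam₁ : lam < 1 / 5) :
    ∃ x₀ : ℝ, ∀ x : ℝ, x₀ ≤ x →
    ∀ n g : ℕ, x < (n : ℝ) → (n : ℝ) ≤ 2 * x →
      Real.log x < (g : ℝ) → (g : ℝ) ≤ 2 * Real.log x →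
      m ≤ primesIn ((g * n : ℕ) : ℝ) (((g * n : ℕ) : ℝ) + 5 * lam * Real.log x) →
      (∀ p : ℕ, p.Prime → ((g * n : ℕ) : ℝ) ≤ (p : ℝ) →
          (p : ℝ) ≤ ((g * n : ℕ) : ℝ) + 5 * lam * Real.log x →
          ((g * n : ℕ) : ℝ) < (p : ℝ) ∧ (p : ℝ) < ((g * n : ℕ) : ℝ) + lam * Real.log x) →
      ∃ j : ℕ, j ≤ ⌊lam * Real.log ((g * n : ℕ) : ℝ)⌋₊ ∧
        primesIn ((g * n + j : ℕ) : ℝ)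
          (((g * n + j : ℕ) : ℝ) + lam * Real.log ((g * n + j : ℕ) : ℝ)) = m := by
  refine ⟨Real.exp (Real.exp (1 / lam + 1)) + 64, ?_⟩
  intro x hx n g hxn hn2x hlg hg2 hcount hloc
  -- Basic bounds on x and log x
  have hexp_pos : (0 : ℝ) < Real.exp (Real.exp (1 / lam + 1)) := Real.exp_pos _
  have hx64 : (64 : ℝ) ≤ x := by linarith
  have hx0 : (0 : ℝ) < x := by linarith
  have hA : Real.exp (1 / lam + 1) ≤ Real.log x := by
    calc Real.exp (1 / lam + 1) = Real.log (Real.exp (Real.exp (1 / lam + 1))) := by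
          rw [Real.log_exp]
      _ ≤ Real.log x := Real.log_le_log hexp_pos (by linarith)
  have hA2 : 1 / lam + 2 ≤ Real.log x := by
    have := Real.add_one_le_exp (1 / lam + 1)
    linarith
  have hlogx_pos : (0 : ℝ) < Real.log x := by
    have : (0 : ℝ) < 1 / lam := by positivity
    linarith
  have hLL : 1 / lam + 1 ≤ Real.log (Real.log x) := by
    calc (1 / lam + 1 : ℝ) = Real.log (Real.exp (1 / lam + 1)) := (Real.log_exp _).symm
      _ ≤ Real.log (Real.log x) := Real.log_le_log (Real.exp_pos _) hA
  -- 4 log x ≤ x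
  have hsqrt : (8 : ℝ) ≤ Real.sqrt x := by
    rw [show (8 : ℝ) = Real.sqrt 64 by
      rw [show (64 : ℝ) = 8 ^ 2 by norm_num, Real.sqrt_sq (by norm_num)]]
    exact Real.sqrt_le_sqrt hx64
  have hlogsqrt : Real.log (Real.sqrt x) ≤ Real.sqrt x - 1 :=
    Real.log_le_sub_one_of_pos (Real.sqrt_pos.mpr hx0)
  have hlog_half : Real.log (Real.sqrt x) = Real.log x / 2 := Real.log_sqrt hx0.le
  have hss : Real.sqrt x * Real.sqrt x = x := Real.mul_self_sqrt hx0.le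
  have h4log : 4 * Real.log x ≤ x := by nlinarith [Real.sqrt_nonneg x]
  -- bounds on n, g
  have hinv : (0 : ℝ) < 1 / lam := by positivity
  have hn1 : (1 : ℝ) ≤ (n : ℝ) := by linarith
  have hg1 : (1 : ℝ) ≤ (g : ℝ) := by linarith
  set N : ℕ := g * n with hNdef
  have hNcast : ((N : ℕ) : ℝ) = (g : ℝ) * (n : ℝ) := by push_cast [hNdef]; ring
  have hNlb : x * Real.log x < (N : ℝ) := by
    rw [hNcast]
    calc x * Real.log x < (n : ℝ) * Real.log x :=
          mul_lt_mul_of_pos_right hxn hlogx_pos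
      _ ≤ (n : ℝ) * (g : ℝ) :=
          mul_le_mul_of_nonneg_left hlg.le (by linarith)
      _ = (g : ℝ) * (n : ℝ) := by ring
  have hxlogx : x < x * Real.log x := by nlinarith
  have hN_ge_x : x < (N : ℝ) := lt_trans hxlogx hNlb
  have hN_pos : (0 : ℝ) < (N : ℝ) := lt_trans hx0 hN_ge_x
  have hNub : (N : ℝ) ≤ x * x := by
    rw [hNcast]
    calc (g : ℝ) * (n : ℝ) ≤ (2 * Real.log x) * (2 * x) := by
          apply mul_le_mul hg2 hn2x (by linarith) (by linarith)
      _ = 4 * Real.log x * x := by ring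
      _ ≤ x * x := by nlinarith
  have hlogN_lb : Real.log x + Real.log (Real.log x) ≤ Real.log (N : ℝ) := by
    calc Real.log x + Real.log (Real.log x) = Real.log (x * Real.log x) :=
          (Real.log_mul (ne_of_gt hx0) (ne_of_gt hlogx_pos)).symm
      _ ≤ Real.log (N : ℝ) := Real.log_le_log (by positivity) hNlb.le
  have hlogN_ub : Real.log (N : ℝ) ≤ 2 * Real.log x := by
    calc Real.log (N : ℝ) ≤ Real.log (x * x) := Real.log_le_log hN_pos hNub
      _ = Real.log x + Real.log x := Real.log_mul (ne_of_gt hx0) (ne_of_gt hx0)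
      _ = 2 * Real.log x := by ring
  set L : ℝ := lam * Real.log x with hLdef
  have hL1 : (1 : ℝ) ≤ L := by
    rw [hLdef]
    calc (1 : ℝ) = lam * (1 / lam) := by field_simp
      _ ≤ lam * Real.log x := by
          apply mul_le_mul_of_nonneg_left _ hlam₀.le
          linarith
  have hlamLN : L + 1 + lam ≤ lam * Real.log (N : ℝ) := by
    have h1 : lam * (Real.log x + Real.log (Real.log x)) ≤ lam * Real.log (N : ℝ) :=
      mul_le_mul_of_nonneg_left hlogN_lb hlam₀.le
    have h2 : lam * (1 / lam + 1) ≤ lam * Real.log (Real.log x) :=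
      mul_le_mul_of_nonneg_left hLL hlam₀.le
    have h3 : lam * (1 / lam + 1) = 1 + lam := by field_simp
    rw [h3] at h2
    rw [mul_add] at h1
    rw [hLdef]
    linarith
  set J : ℕ := ⌊lam * Real.log ((N : ℕ) : ℝ)⌋₊ with hJdef
  have hlamlogN_nonneg : 0 ≤ lam * Real.log (N : ℝ) :=
    mul_nonneg hlam₀.le (by linarith)
  have hJ_ub : (J : ℝ) ≤ lam * Real.log (N : ℝ) := Nat.floor_le hlamlogN_nonneg
  have hJ_ub2 : (J : ℝ) ≤ 2 * L := by
    have : lam * Real.log (N : ℝ) ≤ lam * (2 * Real.log x) :=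
      mul_le_mul_of_nonneg_left hlogN_ub hlam₀.le
    rw [show lam * (2 * Real.log x) = 2 * (lam * Real.log x) by ring] at this
    rw [hLdef]
    linarith
  have hJ_lb : L ≤ (J : ℝ) := by
    have := Nat.sub_one_lt_floor (lam * Real.log ((N : ℕ) : ℝ))
    rw [← hJdef] at this
    linarith
  -- J ≤ N as reals (needed for log(N+j) bounds)
  have hJ_le_N : (J : ℝ) ≤ (N : ℝ) := by
    have h2L : 2 * L ≤ x := by
      have : 2 * (lam * Real.log x) ≤ 2 * ((1/5) * Real.log x) := by nlinarith
      rw [hLdef]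
      linarith
    linarith
  -- log (N + j) bounds for j ≤ J
  have hlogNj_ub : ∀ j : ℕ, j ≤ J → lam * Real.log ((N : ℝ) + (j : ℝ)) ≤ 2 * L + 1 := by
    intro j hj
    have hjr : (j : ℝ) ≤ (J : ℝ) := by exact_mod_cast hj
    have h1 : (N : ℝ) + (j : ℝ) ≤ 2 * (N : ℝ) := by linarith
    have h2 : Real.log ((N : ℝ) + (j : ℝ)) ≤ Real.log (2 * (N : ℝ)) :=
      Real.log_le_log (by positivity) h1
    have h3 : Real.log (2 * (N : ℝ)) = Real.log 2 + Real.log (N : ℝ) :=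
      Real.log_mul (by norm_num) (ne_of_gt hN_pos)
    have h4 : Real.log 2 ≤ 1 := by
      have := Real.log_le_sub_one_of_pos (show (0:ℝ) < 2 by norm_num)
      linarith
    have h5 : lam * Real.log ((N : ℝ) + (j : ℝ)) ≤ lam * (1 + 2 * Real.log x) := by
      apply mul_le_mul_of_nonneg_left _ hlam₀.le
      rw [h3] at h2
      linarith
    have h6 : lam * (1 + 2 * Real.log x) = lam + 2 * (lam * Real.log x) := by ring
    rw [h6] at h5
    rw [hLdef]
    have hlam1 : lam ≤ 1 := by linarith
    linarith
  -- the counting function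
  set c : ℕ → ℕ := fun j => primesIn ((N + j : ℕ) : ℝ)
      (((N + j : ℕ) : ℝ) + lam * Real.log ((N + j : ℕ) : ℝ)) with hcdef
  -- c 0 ≥ m
  have hc0 : m ≤ c 0 := by
    refine le_trans hcount ?_
    rw [hcdef]
    simp only
    unfold primesIn
    apply Set.ncard_le_ncard _ (primesSet_finite _ _)
    intro p hp
    obtain ⟨hpp, hp1, hp2⟩ := hp
    obtain ⟨hgt, hlt⟩ := hloc p hpp hp1 hp2
    have hcast : ((N + 0 : ℕ) : ℝ) = (N : ℝ) := by push_cast; ring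
    refine ⟨hpp, ?_, ?_⟩
    · rw [hcast]; exact hp1
    · rw [hcast]
      have hLlogN : lam * Real.log x ≤ lam * Real.log ((N : ℕ) : ℝ) := by
        rw [← hLdef]; linarith
      linarith [hlt, hLlogN]
  -- c J = 0
  have hcJ : c J = 0 := by
    rw [hcdef]
    simp only
    unfold primesIn
    rw [Set.ncard_eq_zero (primesSet_finite _ _)]
    ext p
    simp only [Set.mem_setOf_eq, Set.mem_empty_iff_false, iff_false]
    rintro ⟨hpp, hp1, hp2⟩
    have hcast : ((N + J : ℕ) : ℝ) = (N : ℝ) + (J : ℝ) := by push_cast; ring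
    rw [hcast] at hp1 hp2
    have hub : (p : ℝ) ≤ (N : ℝ) + 5 * lam * Real.log x := by
      have h1 := hlogNj_ub J le_rfl
      have : (J : ℝ) + lam * Real.log ((N : ℝ) + (J : ℝ)) ≤ 4 * L + 1 := by linarith
      have h5L : 4 * L + 1 ≤ 5 * L := by linarith
      rw [hLdef] at this h5L
      linarith
    have hlb : ((N : ℕ) : ℝ) ≤ (p : ℝ) := by linarith
    obtain ⟨_, hlt⟩ := hloc p hpp hlb hub
    -- p < N + L but p ≥ N + J ≥ N + L
    rw [hLdef] at hJ_lb
    linarith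
  -- step: c j ≤ c (j+1) + 1
  have hstep : ∀ j, j < J → c j ≤ c (j + 1) + 1 := by
    intro j _
    rw [hcdef]
    simp only
    unfold primesIn
    set T := {p : ℕ | p.Prime ∧ ((N + (j+1) : ℕ) : ℝ) ≤ (p : ℝ) ∧
        (p : ℝ) ≤ ((N + (j+1) : ℕ) : ℝ) + lam * Real.log ((N + (j+1) : ℕ) : ℝ)} with hT
    have hsub : {p : ℕ | p.Prime ∧ ((N + j : ℕ) : ℝ) ≤ (p : ℝ) ∧
        (p : ℝ) ≤ ((N + j : ℕ) : ℝ) + lam * Real.log ((N + j : ℕ) : ℝ)} ⊆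
        T ∪ {N + j} := by
      intro p hp
      obtain ⟨hpp, hp1, hp2⟩ := hp
      by_cases hpe : p = N + j
      · exact Or.inr (by simp [hpe])
      · left
        rw [hT]
        have hp1n : N + j ≤ p := by exact_mod_cast hp1
        have hp1n' : N + (j + 1) ≤ p := by omega
        have hlogmono : Real.log ((N + j : ℕ) : ℝ) ≤ Real.log ((N + (j+1) : ℕ) : ℝ) := by
          apply Real.log_le_log
          · have hN0 : 0 < N := by exact_mod_cast hN_pos
            have h1 : 1 ≤ N + j := by omega
            have : (1 : ℝ) ≤ ((N + j : ℕ) : ℝ) := by exact_mod_cast h1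
            linarith
          · exact_mod_cast Nat.le_succ (N + j)
        refine ⟨hpp, by exact_mod_cast hp1n', ?_⟩
        have hcast1 : ((N + (j+1) : ℕ) : ℝ) = ((N + j : ℕ) : ℝ) + 1 := by push_cast; ring
        rw [hcast1]
        have : lam * Real.log ((N + j : ℕ) : ℝ) ≤ lam * Real.log ((N + (j+1) : ℕ) : ℝ) :=
          mul_le_mul_of_nonneg_left hlogmono hlam₀.le
        rw [hcast1] at this
        linarith
    calc {p : ℕ | p.Prime ∧ ((N + j : ℕ) : ℝ) ≤ (p : ℝ) ∧
        (p : ℝ) ≤ ((N + j : ℕ) : ℝ) + lam * Real.log ((N + j : ℕ) : ℝ)}.ncard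
        ≤ (T ∪ {N + j}).ncard :=
          Set.ncard_le_ncard hsub
            (Set.Finite.union (by rw [hT]; exact primesSet_finite _ _) (Set.finite_singleton _))
      _ ≤ T.ncard + ({N + j} : Set ℕ).ncard := Set.ncard_union_le _ _
      _ = T.ncard + 1 := by rw [Set.ncard_singleton]
  obtain ⟨j, hjJ, hjm⟩ := slide_lemma c J m hc0 hcJ hstep
  exact ⟨j, hjJ, hjm⟩
end

section
/- There is an absolute constant C > 0 such that for every integer n ≥ 2, ∑_{p | n} (log p)/p ≤ C · log(ω(n) + 2), where the sum runs over the primes p dividing n and ω(n) denotes the number of distinct prime factors of n. -/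
/-!
Split the prime factors of `n` at `x = (ω(n) + 2)²`. The primes below `x` contribute at most
`∑_{p < x} log p / p = O(log x)`, a Mertens-type bound obtained dyadically from Chebyshev's
`θ(y) ≤ y log 4`. Since `log t / t` decreases for `t ≥ e`, each of the at most `ω(n) ≤ x` primes
above `x` contributes at most `log x / x`, so together at most `log x`.
-/

open Finset Real Chebyshev

theorem sum_primes_Ico_log_div_le {a : ℕ} (b : ℕ) (ha : 0 < a) :
    ∑ p ∈ Ico a b with p.Prime, log p / p ≤ log 4 * b / a := by
  have ha' : (0 : ℝ) < a := by exact_mod_cast ha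
  calc ∑ p ∈ Ico a b with p.Prime, log p / p
      ≤ ∑ p ∈ Ico a b with p.Prime, log p / a := by
        refine sum_le_sum fun p hp ↦ ?_
        have hap : a ≤ p := (mem_Ico.1 (mem_filter.1 hp).1).1
        exact div_le_div_of_nonneg_left (log_natCast_nonneg p) ha' (by exact_mod_cast hap)
    _ = (∑ p ∈ Ico a b with p.Prime, log p) / a := (sum_div ..).symm
    _ ≤ θ b / a := by
        rw [theta_eq_sum_primesLE_log]
        gcongr
        intro p hp
        simp only [mem_filter, mem_Ico] at hp
        exact Nat.mem_primesLE.2 ⟨hp.1.2.le, hp.2⟩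
    _ ≤ log 4 * b / a := by gcongr; exact theta_le_log4_mul_x b.cast_nonneg

theorem sum_primes_lt_two_pow_log_div_le (J : ℕ) :
    ∑ p ∈ range (2 ^ J) with p.Prime, log p / p ≤ 2 * log 4 * J := by
  induction J with
  | zero => simp [show ({0} : Finset ℕ).filter Nat.Prime = ∅ by decide]
  | succ J ih =>
    have hblock : ∑ p ∈ Ico (2 ^ J : ℕ) (2 ^ (J + 1)) with p.Prime, log p / p ≤ 2 * log 4 := by
      refine (sum_primes_Ico_log_div_le _ (Nat.two_pow_pos J)).trans_eq ?_
      push_cast [pow_succ]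
      field_simp
    rw [sum_filter] at ih hblock
    rw [sum_filter, ← sum_range_add_sum_Ico _ (Nat.pow_le_pow_right two_pos J.le_succ)]
    push_cast
    linarith

theorem sum_primes_lt_log_div_le {N : ℕ} (hN : 2 ≤ N) :
    ∑ p ∈ range N with p.Prime, log p / p ≤ 8 * log N := by
  set J := Nat.log 2 N + 1
  have hNJ : N ≤ 2 ^ J := (Nat.lt_pow_succ_log_self one_lt_two N).le
  have hJN : 2 ^ J ≤ N ^ 2 := by
    rw [pow_succ, sq]
    exact Nat.mul_le_mul (Nat.pow_log_le_self 2 (by omega)) hN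
  calc ∑ p ∈ range N with p.Prime, log p / p
      ≤ ∑ p ∈ range (2 ^ J) with p.Prime, log p / p := by gcongr
    _ ≤ 2 * log 4 * J := sum_primes_lt_two_pow_log_div_le J
    _ = 4 * log (2 ^ J) := by rw [log_pow, show (4 : ℝ) = 2 ^ 2 by norm_num, log_pow]; ring
    _ ≤ 4 * log ((N : ℝ) ^ 2) := by gcongr; exact_mod_cast hJN
    _ = 8 * log N := by rw [log_pow]; ring

theorem sum_log_div_le_log {ι : Type*} (s : Finset ι) (f : ι → ℝ) {x : ℝ} (hx : exp 1 ≤ x)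
    (hcard : (#s : ℝ) ≤ x) (hf : ∀ i ∈ s, x ≤ f i) : ∑ i ∈ s, log (f i) / f i ≤ log x := by
  have hx0 : 0 < x := (exp_pos 1).trans_le hx
  have hlog_div_nonneg : 0 ≤ log x / x :=
    div_nonneg (log_nonneg ((one_le_exp zero_le_one).trans hx)) hx0.le
  calc ∑ i ∈ s, log (f i) / f i
      ≤ ∑ i ∈ s, log x / x :=
        sum_le_sum fun i hi ↦ log_div_self_antitoneOn hx (hx.trans (hf i hi)) (hf i hi)
    _ = #s * (log x / x) := by rw [sum_const, nsmul_eq_mul]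
    _ ≤ x * (log x / x) := by gcongr
    _ = log x := mul_div_cancel₀ _ hx0.ne'

/-- There is an absolute constant `C > 0` such that for every `n ≥ 2`,
`∑_{p | n} (log p)/p ≤ C · log(ω(n) + 2)`. -/
theorem stmt12 :
    ∃ C : ℝ, 0 < C ∧
    ∀ n : ℕ, 2 ≤ n →
      ∑ p ∈ n.primeFactors, Real.log p / p
        ≤ C * Real.log (n.primeFactors.card + 2) := by
  refine ⟨18, by norm_num, fun n _ ↦ ?_⟩
  set k := n.primeFactors.card
  set x := (k + 2) ^ 2
  have hx : (x : ℝ) = (k + 2) ^ 2 := by push_cast [x]; rfl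
  have hsmall : ∑ p ∈ n.primeFactors with p < x, log p / p ≤ 8 * log x := by
    refine (sum_le_sum_of_subset_of_nonneg (fun p ↦ ?_)
      fun p _ _ ↦ div_nonneg (log_natCast_nonneg p) p.cast_nonneg).trans
      (sum_primes_lt_log_div_le ((by omega : 2 ≤ k + 2).trans (Nat.le_self_pow two_ne_zero _)))
    simp only [mem_filter, mem_range]
    exact fun h ↦ ⟨h.2, Nat.prime_of_mem_primeFactors h.1⟩
  have hlarge : ∑ p ∈ n.primeFactors with ¬ p < x, log p / p ≤ log x := by
    refine sum_log_div_le_log _ _ ?_ ?_ fun p hp ↦ ?_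
    · rw [hx]; nlinarith [exp_one_lt_d9, k.cast_nonneg (α := ℝ)]
    · have hcard : (#{p ∈ n.primeFactors | ¬p < x} : ℝ) ≤ k := by
        exact_mod_cast card_filter_le _ _
      rw [hx]; nlinarith
    · exact_mod_cast not_lt.1 (mem_filter.1 hp).2
  rw [← sum_filter_add_sum_filter_not n.primeFactors (· < x)]
  rw [hx, log_pow] at hsmall hlarge
  push_cast at hsmall hlarge
  linarith
end
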